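/- With x^s − 1 = Π_{j=1}^t f_j^{s_j} (distinct irreducibles, d_j = deg f_j), the order of SL_m(F_q[x]/⟨x^s−1⟩) equals q^{m²s} Π_{j=1}^t Π_{i=1}^m (1 − q^{−i d_j}) divided by Π_{j=1}^t (q^{d_j} − 1) q^{d_j(s_j−1)}. -/

import Mathlib

/-!
Put `R = 𝔽_q[x]/(x^s - 1)`. Since `det : GL_m(R) → Rˣ` is onto with kernel `SL_m(R)`,
`|SL_m(R)| = |GL_m(R)| / |Rˣ|`. By the Chinese remainder theorem `R ≅ ∏ⱼ Aⱼ` with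
`Aⱼ = 𝔽_q[x]/(fⱼ^sⱼ)`, and both counts are multiplicative over the factors. Reduction
`Aⱼ → 𝔽_q[x]/(fⱼ) ≅ 𝔽_{q^dⱼ}` is onto with nilpotent kernel of size `q^(dⱼ(sⱼ-1))`, so it is a
local homomorphism: units of `Aⱼ` (and invertible matrices over `Aⱼ`) are exactly the lifts of
those over the residue field. Hence `|Aⱼˣ| = (q^dⱼ - 1) q^(dⱼ(sⱼ-1))` and
`|GL_m(Aⱼ)| = |GL_m(𝔽_{q^dⱼ})| q^(dⱼ(sⱼ-1)m²)`, and `|GL_m(𝔽_Q)| = Q^(m²) ∏ᵢ (1 - Q^(-i))`.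
-/

open Polynomial

section LocalHom

variable {A B : Type*}

theorem RingHom.natCard_eq_mul_natCard_ker [Ring A] [Ring B] (φ : A →+* B)
    (hφ : Function.Surjective φ) :
    Nat.card A = Nat.card B * Nat.card (RingHom.ker φ) := by
  rw [← φ.toAddMonoidHom.ker.card_mul_index, AddSubgroup.index_ker,
    AddMonoidHom.range_eq_top.mpr hφ, AddSubgroup.card_top, mul_comm]
  rfl

theorem RingHom.natCard_units_eq_mul_natCard_ker [Ring A] [Ring B] (φ : A →+* B)
    [IsLocalHom φ] (hφ : Function.Surjective φ) :
    Nat.card Aˣ = Nat.card Bˣ * Nat.card (RingHom.ker φ) := by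
  let u : Aˣ →* Bˣ := Units.map φ
  have hu : u.range = ⊤ :=
    MonoidHom.range_eq_top.mpr (IsLocalRing.surjective_units_map_of_local_ringHom φ hφ ‹_›)
  let ker_equiv : u.ker ≃ RingHom.ker φ :=
    { toFun v := ⟨(v : Aˣ) - 1, by
        simpa [RingHom.mem_ker, sub_eq_zero, u] using congrArg Units.val v.2⟩
      invFun k := ⟨(IsUnit.of_map φ (1 + (k : A)) (by simp [RingHom.mem_ker.mp k.2])).unit, by
        ext; simp [u, RingHom.mem_ker.mp k.2]⟩
      left_inv v := by ext; simp
      right_inv k := by ext; simp }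
  rw [← u.ker.card_mul_index, Subgroup.index_ker, hu, Nat.card_congr ker_equiv,
    Subgroup.card_top, mul_comm]

variable {n : Type*} [Fintype n] [DecidableEq n] [CommRing A] [CommRing B] (φ : A →+* B)

instance RingHom.isLocalHom_mapMatrix [IsLocalHom φ] :
    IsLocalHom (φ.mapMatrix : Matrix n n A →+* Matrix n n B) where
  map_nonunit M hM := by
    rw [Matrix.isUnit_iff_isUnit_det] at hM ⊢
    exact IsUnit.of_map φ _ (by rwa [RingHom.map_det])

theorem RingHom.mapMatrix_surjective (hφ : Function.Surjective φ) :
    Function.Surjective (φ.mapMatrix : Matrix n n A →+* Matrix n n B) := fun N =>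
  ⟨N.map (Function.surjInv hφ), by ext; simp [Function.surjInv_eq hφ]⟩

theorem RingHom.natCard_ker_mapMatrix :
    Nat.card (RingHom.ker (φ.mapMatrix : Matrix n n A →+* Matrix n n B))
      = Nat.card (RingHom.ker φ) ^ (Fintype.card n ^ 2) := by
  have mem_ker (M : Matrix n n A) :
      M ∈ RingHom.ker (φ.mapMatrix : Matrix n n A →+* Matrix n n B) ↔
        ∀ i j, M i j ∈ RingHom.ker φ := by
    simp only [RingHom.mem_ker, ← Matrix.ext_iff, RingHom.mapMatrix_apply, Matrix.map_apply,
      Matrix.zero_apply]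
  let e :
      RingHom.ker (φ.mapMatrix : Matrix n n A →+* Matrix n n B) ≃ Matrix n n (RingHom.ker φ) :=
    { toFun M := Matrix.of fun i j => ⟨M.1 i j, (mem_ker M.1).mp M.2 i j⟩
      invFun N := ⟨N.map (↑), (mem_ker _).mpr fun i j => (N i j).2⟩
      left_inv M := rfl
      right_inv N := rfl }
  rw [Nat.card_congr e, Matrix, Nat.card_fun, Nat.card_fun, ← pow_mul, ← sq,
    Nat.card_eq_fintype_card (α := n)]

theorem RingHom.natCard_GL_eq_mul_natCard_ker [IsLocalHom φ] (hφ : Function.Surjective φ) :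
    Nat.card (GL n A) = Nat.card (GL n B) * Nat.card (RingHom.ker φ) ^ (Fintype.card n ^ 2) := by
  rw [φ.mapMatrix.natCard_units_eq_mul_natCard_ker (φ.mapMatrix_surjective hφ),
    natCard_ker_mapMatrix]

end LocalHom

theorem Matrix.SpecialLinearGroup.natCard_mul_natCard_units {n : Type*} [Fintype n]
    [DecidableEq n] [Nonempty n] (R : Type*) [CommRing R] :
    Nat.card (SpecialLinearGroup n R) * Nat.card Rˣ = Nat.card (GL n R) := by
  let det : GL n R →* Rˣ := GeneralLinearGroup.det
  have hrange : det.range = ⊤ := MonoidHom.range_eq_top.mpr GeneralLinearGroup.det_surjective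
  let e : SpecialLinearGroup n R ≃ det.ker :=
    { toFun A := ⟨toGL A, by ext; simp [det]⟩
      invFun g := ⟨g.1, congrArg Units.val g.2⟩
      left_inv A := rfl
      right_inv g := Subtype.ext (Units.ext rfl) }
  rw [← det.ker.card_mul_index, Subgroup.index_ker, hrange, Subgroup.card_top, Nat.card_congr e]

theorem Matrix.SpecialLinearGroup.natCard_eq_div {n : Type*} [Fintype n] [DecidableEq n]
    [Nonempty n] (R : Type*) [CommRing R] [Finite R] :
    (Nat.card (SpecialLinearGroup n R) : ℚ) = Nat.card (GL n R) / Nat.card Rˣ := by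
  rw [eq_div_iff (Nat.cast_ne_zero.mpr Nat.card_pos.ne'), ← Nat.cast_mul,
    natCard_mul_natCard_units]

theorem Ideal.Quotient.isLocalHom_factor {R : Type*} [CommRing R] {I J : Ideal R} (hIJ : I ≤ J)
    (hJ : J ≤ I.radical) : IsLocalHom (Ideal.Quotient.factor hIJ) where
  map_nonunit a ha := by
    obtain ⟨a, rfl⟩ := Ideal.Quotient.mk_surjective a
    obtain ⟨b, hb⟩ := isUnit_iff_exists_inv.mp ha
    obtain ⟨b, rfl⟩ := Ideal.Quotient.mk_surjective b
    rw [Ideal.Quotient.factor_mk, ← map_mul, ← map_one (Ideal.Quotient.mk J),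
      Ideal.Quotient.eq] at hb
    -- `a * b ≡ 1` modulo the nil ideal `J / I`, so `a * b` is a unit of `R / I`
    obtain ⟨k, hk⟩ := hJ hb
    have hnil : IsNilpotent (Ideal.Quotient.mk I (a * b) - 1) :=
      ⟨k, by rw [← map_one (Ideal.Quotient.mk I), ← map_sub, ← map_pow,
        Ideal.Quotient.eq_zero_iff_mem]; exact hk⟩
    have hab := hnil.isUnit_add_one
    rw [sub_add_cancel, map_mul] at hab
    exact isUnit_of_mul_isUnit_left hab

section QuotientPow

variable {R : Type*} [CommRing R] (I : Ideal R) {n : ℕ} (hn : n ≠ 0)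

theorem Ideal.Quotient.isLocalHom_factor_pow :
    IsLocalHom (Ideal.Quotient.factor (Ideal.pow_le_self (I := I) hn)) :=
  isLocalHom_factor _ (by rw [Ideal.radical_pow I hn]; exact Ideal.le_radical)

theorem Ideal.natCard_quotient_pow : Nat.card (R ⧸ I ^ n) = Nat.card (R ⧸ I)
    * Nat.card (RingHom.ker (Ideal.Quotient.factor (Ideal.pow_le_self (I := I) hn))) :=
  RingHom.natCard_eq_mul_natCard_ker _ (Ideal.Quotient.factor_surjective _)

theorem Ideal.natCard_units_quotient_pow : Nat.card (R ⧸ I ^ n)ˣ = Nat.card (R ⧸ I)ˣ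
    * Nat.card (RingHom.ker (Ideal.Quotient.factor (Ideal.pow_le_self (I := I) hn))) :=
  have := Ideal.Quotient.isLocalHom_factor_pow I hn
  RingHom.natCard_units_eq_mul_natCard_ker _ (Ideal.Quotient.factor_surjective _)

theorem Ideal.natCard_GL_quotient_pow (ι : Type*) [Fintype ι] [DecidableEq ι] :
    Nat.card (GL ι (R ⧸ I ^ n)) = Nat.card (GL ι (R ⧸ I))
      * Nat.card (RingHom.ker (Ideal.Quotient.factor (Ideal.pow_le_self (I := I) hn)))
        ^ (Fintype.card ι ^ 2) :=
  have := Ideal.Quotient.isLocalHom_factor_pow I hn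
  RingHom.natCard_GL_eq_mul_natCard_ker _ (Ideal.Quotient.factor_surjective _)

end QuotientPow

theorem Polynomial.natCard_quotient_span_singleton {K : Type*} [Field K] {f : K[X]} (hf : f ≠ 0) :
    Nat.card (K[X] ⧸ Ideal.span {f}) = Nat.card K ^ f.natDegree := by
  have : Module.Finite K (K[X] ⧸ Ideal.span {f}) := (AdjoinRoot.powerBasis hf).finite
  rw [Module.natCard_eq_pow_finrank (K := K), finrank_quotient_span_eq_natDegree]

theorem Polynomial.finite_quotient_span_singleton {K : Type*} [Field K] [Finite K] {f : K[X]}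
    (hf : f ≠ 0) : Finite (K[X] ⧸ Ideal.span {f}) :=
  Nat.finite_of_card_ne_zero
    (by rw [natCard_quotient_span_singleton hf]; exact pow_ne_zero _ Nat.card_pos.ne')

theorem Finset.prod_range_pow_sub_pow {F : Type*} [Field F] {Q : F} (hQ : Q ≠ 0) (m : ℕ) :
    ∏ i ∈ range m, (Q ^ m - Q ^ i) = Q ^ (m ^ 2) * ∏ i ∈ Icc 1 m, (1 - Q ^ (-(i : ℤ))) := by
  have hIcc : ∏ i ∈ Icc 1 m, (1 - Q ^ (-(i : ℤ)))
      = ∏ i ∈ range m, (1 - Q ^ (-((m - i : ℕ) : ℤ))) := by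
    rw [← Ico_add_one_right_eq_Icc, prod_Ico_eq_prod_range, ← prod_range_reflect]
    refine prod_congr rfl fun i hi => ?_
    rw [show 1 + (m + 1 - 1 - 1 - i) = m - i by simp at hi; omega]
  rw [hIcc, sq, pow_mul, pow_eq_prod_const (Q ^ m) m, ← prod_mul_distrib]
  refine prod_congr rfl fun i hi => ?_
  have him : i ≤ m := (mem_range.mp hi).le
  rw [mul_sub, mul_one, ← zpow_natCast, ← zpow_natCast, ← zpow_add₀ hQ, Nat.cast_sub him]
  ring_nf

theorem Matrix.natCard_GL_field_eq_pow_mul_prod (F : Type*) [Field F] [Fintype F] (m : ℕ) :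
    (Nat.card (GL (Fin m) F) : ℚ) = (Fintype.card F : ℚ) ^ (m ^ 2)
      * ∏ i ∈ Finset.Icc 1 m, (1 - (Fintype.card F : ℚ) ^ (-(i : ℤ))) := by
  have hF : (Fintype.card F : ℚ) ≠ 0 := by exact_mod_cast Fintype.card_ne_zero
  rw [card_GL_field, Nat.cast_prod, ← Finset.prod_range_pow_sub_pow hF,
    Fin.prod_univ_eq_prod_range (fun i => ((Fintype.card F ^ m - Fintype.card F ^ i : ℕ) : ℚ))]
  refine Finset.prod_congr rfl fun i hi => ?_
  rw [Nat.cast_sub (Nat.pow_le_pow_right Fintype.card_pos (Finset.mem_range.mp hi).le)]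
  norm_cast

section PrimePower

variable {K : Type*} [Field K] {p : K[X]}

theorem Polynomial.natCard_quotient_span_pow (hp0 : p ≠ 0) (n : ℕ) :
    Nat.card (K[X] ⧸ Ideal.span {p} ^ n) = Nat.card K ^ (p.natDegree * n) := by
  rw [Ideal.span_singleton_pow, natCard_quotient_span_singleton (pow_ne_zero n hp0),
    natDegree_pow, mul_comm]

variable [Finite K] {n : ℕ} (hp : Irreducible p) (hn : n ≠ 0)
include hp hn

theorem Polynomial.natCard_ker_factor_span_pow :
    Nat.card (RingHom.ker (Ideal.Quotient.factor (Ideal.pow_le_self (I := Ideal.span {p}) hn)))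
      = Nat.card K ^ (p.natDegree * (n - 1)) := by
  have h := Ideal.natCard_quotient_pow (Ideal.span {p}) hn
  rw [natCard_quotient_span_pow hp.ne_zero, natCard_quotient_span_singleton hp.ne_zero] at h
  obtain ⟨k, rfl⟩ := Nat.exists_eq_succ_of_ne_zero hn
  rw [Nat.mul_succ, pow_add, mul_comm] at h
  exact (Nat.eq_of_mul_eq_mul_left (pow_pos Nat.card_pos _) h).symm

theorem Polynomial.natCard_units_quotient_span_pow :
    Nat.card (K[X] ⧸ Ideal.span {p} ^ n)ˣ
      = (Nat.card K ^ p.natDegree - 1) * Nat.card K ^ (p.natDegree * (n - 1)) := by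
  rw [Ideal.natCard_units_quotient_pow _ hn, natCard_ker_factor_span_pow hp hn]
  have := PrincipalIdealRing.isMaximal_of_irreducible hp
  let := Ideal.Quotient.field (Ideal.span {p})
  rw [Nat.card_units, natCard_quotient_span_singleton hp.ne_zero]

theorem Polynomial.natCard_GL_quotient_span_pow (m : ℕ) :
    (Nat.card (GL (Fin m) (K[X] ⧸ Ideal.span {p} ^ n)) : ℚ)
      = (Nat.card K : ℚ) ^ (m ^ 2 * (p.natDegree * n))
        * ∏ i ∈ Finset.Icc 1 m, (1 - (Nat.card K : ℚ) ^ (-((i * p.natDegree : ℕ) : ℤ))) := by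
  rw [Ideal.natCard_GL_quotient_pow _ hn, natCard_ker_factor_span_pow hp hn, Nat.cast_mul]
  have := PrincipalIdealRing.isMaximal_of_irreducible hp
  let := Ideal.Quotient.field (Ideal.span {p})
  have hcard := natCard_quotient_span_singleton hp.ne_zero
  have := finite_quotient_span_singleton hp.ne_zero
  let := Fintype.ofFinite (K[X] ⧸ Ideal.span {p})
  rw [Matrix.natCard_GL_field_eq_pow_mul_prod, ← Nat.card_eq_fintype_card, hcard]
  have hpow (i : ℕ) : ((Nat.card K : ℚ) ^ p.natDegree) ^ (-(i : ℤ))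
      = (Nat.card K : ℚ) ^ (-((i * p.natDegree : ℕ) : ℤ)) := by
    rw [← zpow_natCast, ← zpow_mul]
    push_cast
    ring_nf
  obtain ⟨k, rfl⟩ := Nat.exists_eq_succ_of_ne_zero hn
  simp only [Nat.cast_pow, Fintype.card_fin, hpow, Nat.succ_sub_one, Nat.succ_eq_add_one]
  ring

end PrimePower

theorem MulEquiv.natCard_units_eq_prod {M ι : Type*} [Monoid M] [Fintype ι] {N : ι → Type*}
    [∀ i, Monoid (N i)] (e : M ≃* Π i, N i) : Nat.card Mˣ = ∏ i, Nat.card (N i)ˣ := by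
  rw [Nat.card_congr ((Units.mapEquiv e).trans MulEquiv.piUnits).toEquiv, Nat.card_pi]

theorem RingEquiv.natCard_GL_eq_prod {n R ι : Type*} [Fintype n] [DecidableEq n] [CommRing R]
    [Fintype ι] {A : ι → Type*} [∀ i, CommRing (A i)] (e : R ≃+* Π i, A i) :
    Nat.card (GL n R) = ∏ i, Nat.card (GL n (A i)) :=
  (e.mapMatrix.trans Matrix.piRingEquiv).toMulEquiv.natCard_units_eq_prod

noncomputable def Polynomial.quotientEquivPiOfProdEq {K ι : Type*} [Field K] [Fintype ι]
    {g : K[X]} {f : ι → K[X]} (e : ι → ℕ) (hirr : ∀ i, Irreducible (f i))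
    (hmonic : ∀ i, (f i).Monic) (hinj : Function.Injective f) (hprod : g = ∏ i, f i ^ e i) :
    K[X] ⧸ Ideal.span {g} ≃+* Π i, K[X] ⧸ Ideal.span {f i} ^ e i :=
  IsDedekindDomain.quotientEquivPiOfProdEq _ _ e
    (fun i => Ideal.prime_span_singleton_iff.mpr (hirr i).prime)
    (fun i j hij h => hij (hinj (eq_of_monic_of_associated (hmonic i) (hmonic j)
      (Ideal.span_singleton_eq_span_singleton.mp h))))
    (by simp_rw [Ideal.span_singleton_pow, Ideal.prod_span_singleton, hprod])

theorem stmt13_general (q s m t : ℕ) (hm : 0 < m)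
    (Fq : Type*) [Field Fq] [Fintype Fq] (hq : Fintype.card Fq = q)
    (f : Fin t → Polynomial Fq) (sj : Fin t → ℕ) (d : Fin t → ℕ)
    (hirr : ∀ j, Irreducible (f j)) (hmonic : ∀ j, (f j).Monic)
    (hdist : Function.Injective f) (hsj : ∀ j, 0 < sj j)
    (hd : ∀ j, d j = (f j).natDegree)
    (hfact : Polynomial.X ^ s - 1 = ∏ j : Fin t, f j ^ sj j) :
    (Nat.card (Matrix.SpecialLinearGroup (Fin m)
        (Polynomial Fq ⧸ (Ideal.span {Polynomial.X ^ s - 1} : Ideal (Polynomial Fq)))) : ℚ)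
      = ((q : ℚ) ^ (m ^ 2 * s) *
          ∏ j : Fin t, ∏ i ∈ Finset.Icc 1 m, (1 - (q : ℚ) ^ (-((i * d j : ℕ) : ℤ)))) /
        ∏ j : Fin t, ((q : ℚ) ^ (d j) - 1) * (q : ℚ) ^ (d j * (sj j - 1)) := by
  have hcard : Nat.card Fq = q := Nat.card_eq_fintype_card.trans hq
  have hdeg : s = ∑ j, d j * sj j := by
    have h := congrArg natDegree hfact
    rw [← C_1, natDegree_X_pow_sub_C,
      natDegree_prod_of_monic _ _ fun j _ => (hmonic j).pow _] at h
    simp_rw [h, natDegree_pow, hd, mul_comm]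
  set R := Fq[X] ⧸ (Ideal.span {X ^ s - 1} : Ideal Fq[X])
  let e : R ≃+* Π j, Fq[X] ⧸ Ideal.span {f j} ^ sj j :=
    quotientEquivPiOfProdEq sj hirr hmonic hdist hfact
  have hunits :
      (Nat.card Rˣ : ℚ) = ∏ j, ((q : ℚ) ^ d j - 1) * (q : ℚ) ^ (d j * (sj j - 1)) := by
    rw [e.toMulEquiv.natCard_units_eq_prod, Nat.cast_prod]
    refine Finset.prod_congr rfl fun j _ => ?_
    rw [natCard_units_quotient_span_pow (hirr j) (hsj j).ne', hcard, ← hd,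
      Nat.cast_mul, Nat.cast_sub (Nat.one_le_pow _ _ (hq ▸ Fintype.card_pos))]
    norm_cast
  have hGL : (Nat.card (GL (Fin m) R) : ℚ)
      = (q : ℚ) ^ (m ^ 2 * s) *
          ∏ j, ∏ i ∈ Finset.Icc 1 m, (1 - (q : ℚ) ^ (-((i * d j : ℕ) : ℤ))) := by
    rw [e.natCard_GL_eq_prod, Nat.cast_prod]
    simp_rw [natCard_GL_quotient_span_pow (hirr _) (hsj _).ne', hcard, ← hd]
    rw [Finset.prod_mul_distrib, Finset.prod_pow_eq_pow_sum, ← Finset.mul_sum, ← hdeg]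
  have : Finite R := finite_quotient_span_singleton
    (hfact ▸ Finset.prod_ne_zero_iff.mpr fun j _ => pow_ne_zero _ (hirr j).ne_zero)
  have : Nonempty (Fin m) := ⟨⟨0, hm⟩⟩
  rw [Matrix.SpecialLinearGroup.natCard_eq_div, hGL, hunits]

/-- `|SL_m(F_q[x]/⟨x^s-1⟩)| = q^{m²s} Π_j Π_{i=1}^m (1 - q^{-i d_j}) / Π_j (q^{d_j}-1) q^{d_j(s_j-1)}`. -/
theorem stmt13 (q s m t : ℕ) (hs : 0 < s) (hm : 0 < m)
    (Fq : Type*) [Field Fq] [Fintype Fq] (hq : Fintype.card Fq = q)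
    (f : Fin t → Polynomial Fq) (sj : Fin t → ℕ) (d : Fin t → ℕ)
    (hirr : ∀ j, Irreducible (f j)) (hmonic : ∀ j, (f j).Monic)
    (hdist : Function.Injective f) (hsj : ∀ j, 0 < sj j)
    (hd : ∀ j, d j = (f j).natDegree)
    (hfact : Polynomial.X ^ s - 1 = ∏ j : Fin t, f j ^ sj j) :
    (Nat.card (Matrix.SpecialLinearGroup (Fin m)
        (Polynomial Fq ⧸ (Ideal.span {Polynomial.X ^ s - 1} : Ideal (Polynomial Fq)))) : ℚ)
      = ((q : ℚ) ^ (m ^ 2 * s) *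
          ∏ j : Fin t, ∏ i ∈ Finset.Icc 1 m, (1 - (q : ℚ) ^ (-((i * d j : ℕ) : ℤ)))) /
        ∏ j : Fin t, ((q : ℚ) ^ (d j) - 1) * (q : ℚ) ^ (d j * (sj j - 1)) :=
  stmt13_general q s m t hm Fq hq f sj d hirr hmonic hdist hsj hd hfact
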